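/- Assume g satisfies (H2) and (H3) and g'''(0) ≠ 0. For (b, λ) ∈ ℝ × (0, ∞) for which the integrals below are finite and the denominator is nonzero, define m₁(b, λ) = ∫_ℝ z g'(λz + b) e^{−z²/2} dz / ∫_ℝ g'(λz + b) e^{−z²/2} dz and m₂(b, λ) = ∫_ℝ z² g'(λz + b) e^{−z²/2} dz / ∫_ℝ g'(λz + b) e^{−z²/2} dz. Then there exist B > 0 and L > 0 such that the map (b, λ) ↦ (m₁(b, λ), m₂(b, λ)) is injective on (−B, B) × (0, L). -/

import Mathlib

/-!
Write `S f (b, λ) = ∫ f(λz + b) e^{-z²/2} dz` (`gaussSmooth`). Gaussian integration by parts,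
`∫ z u(z) e^{-z²/2} dz = ∫ u'(z) e^{-z²/2} dz`, gives `m₁ = λ S g'' / S g'` and
`m₂ = (S g' + λ² S g''') / S g'`. By (H3), `S g'`, `S g''` and `S g'''` are Lipschitz near the
origin and `∂_b S g'' = S g'''`; at the origin they equal `c g'(0) ≠ 0`, `c g''(0) = 0` (`g'` is
even) and `c g'''(0) ≠ 0`, where `c = ∫ e^{-z²/2} dz`.

If `(b, λ)` and `(b', λ')` have the same moments, the cross-multiplied formula for `m₂` gives
`|λ - λ'| ≲ λ' |b - b'|`. In the cross-multiplied formula for `m₁` the term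
`c² g'(0) g'''(0) (b - b')` then dominates all others on a small enough box, so `b = b'`, and
then `λ = λ'`.
-/

open MeasureTheory Real Filter

noncomputable section

/-- Assumption (H2) on the link function. -/
def CondH2 (g : ℝ → ℝ) : Prop :=
  StrictMono g ∧ Tendsto g atBot (nhds 0) ∧ Tendsto g atTop (nhds 1) ∧
    ContDiff ℝ 4 g ∧ StrictAntiOn (deriv g) (Set.Ici 0) ∧
    ∀ z : ℝ, g z + g (-z) = 1

/-- Assumption (H3) on the link function: domination of the derivatives of order
2, 3, 4 near `(λ, b) = (0, 0)`. -/
def CondH3 (g : ℝ → ℝ) : Prop :=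
  ∃ δ > (0 : ℝ), ∃ L : Fin 3 → ℝ → ℝ,
    (∀ s, (∀ z, 0 ≤ L s z) ∧
      Integrable (fun z => L s z * Real.exp (-z ^ 2 / 2))) ∧
    ∀ s : Fin 3, ∀ z lam b : ℝ, 0 < lam → lam < δ → |b| < δ →
      (|z| + 1) * |iteratedDeriv ((s : ℕ) + 2) g (lam * z + b)| ≤ L s z

/-- `m₁(b, λ) = ∫ z g'(λz+b) e^{−z²/2} dz / ∫ g'(λz+b) e^{−z²/2} dz`. -/
def m1 (g : ℝ → ℝ) (b lam : ℝ) : ℝ :=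
  (∫ z : ℝ, z * deriv g (lam * z + b) * Real.exp (-z ^ 2 / 2)) /
    ∫ z : ℝ, deriv g (lam * z + b) * Real.exp (-z ^ 2 / 2)

/-- `m₂(b, λ) = ∫ z² g'(λz+b) e^{−z²/2} dz / ∫ g'(λz+b) e^{−z²/2} dz`. -/
def m2 (g : ℝ → ℝ) (b lam : ℝ) : ℝ :=
  (∫ z : ℝ, z ^ 2 * deriv g (lam * z + b) * Real.exp (-z ^ 2 / 2)) /
    ∫ z : ℝ, deriv g (lam * z + b) * Real.exp (-z ^ 2 / 2)

open scoped NNReal Topology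

def gaussWeight (z : ℝ) : ℝ := Real.exp (-z ^ 2 / 2)

lemma gaussWeight_pos (z : ℝ) : 0 < gaussWeight z := Real.exp_pos _

@[fun_prop]
lemma continuous_gaussWeight : Continuous gaussWeight := by
  unfold gaussWeight; fun_prop

lemma hasDerivAt_gaussWeight (z : ℝ) : HasDerivAt gaussWeight (-z * gaussWeight z) z := by
  have h : HasDerivAt (fun z : ℝ => -z ^ 2 / 2) (-z) z := by
    simpa using (((hasDerivAt_pow 2 z).neg).div_const 2).congr_deriv (by ring)
  exact ((Real.hasDerivAt_exp _).comp z h).congr_deriv (by simp only [gaussWeight]; ring)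

lemma integrable_pow_mul_gaussWeight (k : ℕ) : Integrable (fun z => z ^ k * gaussWeight z) := by
  convert integrable_rpow_mul_exp_neg_mul_sq (b := 1 / 2) (by norm_num) (s := k)
    (by linarith [k.cast_nonneg (α := ℝ)]) using 2 with z
  rw [Real.rpow_natCast, gaussWeight]; ring_nf

lemma integral_gaussWeight_pos : 0 < ∫ z, gaussWeight z := by
  have h : gaussWeight = fun z => Real.exp (-(1 / 2) * z ^ 2) := by
    ext z; rw [gaussWeight]; ring_nf
  rw [h, integral_gaussian]
  positivity

lemma integral_mul_mul_gaussWeight_eq {u u' : ℝ → ℝ} (hu : ∀ z, HasDerivAt u (u' z) z)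
    (hi : Integrable (fun z => u z * gaussWeight z))
    (hi₁ : Integrable (fun z => z * u z * gaussWeight z))
    (hi' : Integrable (fun z => u' z * gaussWeight z)) :
    ∫ z, z * u z * gaussWeight z = ∫ z, u' z * gaussWeight z := by
  have hderiv : ∀ z, HasDerivAt (fun z => u z * gaussWeight z)
      (u' z * gaussWeight z - z * u z * gaussWeight z) z := fun z =>
    ((hu z).mul (hasDerivAt_gaussWeight z)).congr_deriv (by ring)
  have := integral_eq_zero_of_hasDerivAt_of_integrable hderiv (hi'.sub hi₁) hi
  rw [integral_sub hi' hi₁] at this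
  linarith

lemma integrable_pow_mul_comp_mul_gaussWeight {f : ℝ → ℝ} {C : ℝ} (hf : Continuous f)
    (hC : ∀ x, |f x| ≤ C) (k : ℕ) (l b : ℝ) :
    Integrable (fun z => z ^ k * f (l * z + b) * gaussWeight z) := by
  refine ((integrable_pow_mul_gaussWeight k).norm.const_mul C).mono'
    (Continuous.aestronglyMeasurable (by fun_prop)) (ae_of_all _ fun z => ?_)
  simp only [norm_mul]
  calc ‖z ^ k‖ * ‖f (l * z + b)‖ * ‖gaussWeight z‖ ≤ ‖z ^ k‖ * C * ‖gaussWeight z‖ := by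
        gcongr; exact hC _
    _ = C * (‖z ^ k‖ * ‖gaussWeight z‖) := by ring

def paramBox (δ : ℝ) : Set (ℝ × ℝ) := Set.Ioo (-δ) δ ×ˢ Set.Ico 0 δ

lemma convex_paramBox (δ : ℝ) : Convex ℝ (paramBox δ) := (convex_Ioo _ _).prod (convex_Ico _ _)

lemma paramBox_mono {η δ : ℝ} (h : η ≤ δ) : paramBox η ⊆ paramBox δ :=
  Set.prod_mono (Set.Ioo_subset_Ioo (neg_le_neg h) h) (Set.Ico_subset_Ico_right h)

lemma zero_mem_paramBox {δ : ℝ} (hδ : 0 < δ) : (0 : ℝ × ℝ) ∈ paramBox δ :=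
  ⟨⟨neg_lt_zero.2 hδ, hδ⟩, ⟨le_rfl, hδ⟩⟩

lemma dist_zero_le_of_mem_paramBox {η : ℝ} {p : ℝ × ℝ} (hp : p ∈ paramBox η) :
    dist p 0 ≤ η := by
  obtain ⟨⟨h₁, h₂⟩, h₃, h₄⟩ := hp
  simp only [Prod.dist_eq, Prod.fst_zero, Prod.snd_zero, Real.dist_0_eq_abs]
  exact max_le (abs_le.2 ⟨h₁.le, h₂.le⟩) ((abs_of_nonneg h₃).trans_le h₄.le)

def DominatedOnBox (f : ℝ → ℝ) (δ : ℝ) (L : ℝ → ℝ) : Prop :=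
  ∀ p ∈ paramBox δ, ∀ z, (|z| + 1) * |f (p.2 * z + p.1)| ≤ L z

def gaussSmooth (f : ℝ → ℝ) (p : ℝ × ℝ) : ℝ := ∫ z, f (p.2 * z + p.1) * gaussWeight z

lemma gaussSmooth_zero (f : ℝ → ℝ) : gaussSmooth f 0 = f 0 * ∫ z, gaussWeight z := by
  simp [gaussSmooth, integral_const_mul]

lemma integral_mul_comp_mul_gaussWeight {f f' : ℝ → ℝ} (hf : ∀ x, HasDerivAt f (f' x) x)
    {b l : ℝ} (hi : Integrable (fun z => f (l * z + b) * gaussWeight z))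
    (hi₁ : Integrable (fun z => z * f (l * z + b) * gaussWeight z))
    (hi' : Integrable (fun z => f' (l * z + b) * gaussWeight z)) :
    ∫ z, z * f (l * z + b) * gaussWeight z = l * gaussSmooth f' (b, l) := by
  have hu : ∀ z, HasDerivAt (fun z => f (l * z + b)) (l * f' (l * z + b)) z := fun z =>
    ((hf _).comp z (((hasDerivAt_id z).const_mul l).add_const b)).congr_deriv (by simp [mul_comm])
  calc ∫ z, z * f (l * z + b) * gaussWeight z = ∫ z, l * f' (l * z + b) * gaussWeight z :=
        integral_mul_mul_gaussWeight_eq hu hi hi₁ (by simpa only [mul_assoc] using hi'.const_mul l)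
    _ = l * gaussSmooth f' (b, l) := by
        rw [gaussSmooth, ← integral_const_mul]; simp only [mul_assoc]

namespace DominatedOnBox

variable {f f' f'' L L' : ℝ → ℝ} {δ : ℝ}

lemma integrable_mul_comp_mul_gaussWeight (hL : DominatedOnBox f δ L) (hf : Continuous f)
    (hLi : Integrable (fun z => L z * gaussWeight z)) {p : ℝ × ℝ} (hp : p ∈ paramBox δ) :
    Integrable (fun z => z * f (p.2 * z + p.1) * gaussWeight z) := by
  refine hLi.mono' (Continuous.aestronglyMeasurable (by fun_prop)) (ae_of_all _ fun z => ?_)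
  rw [Real.norm_eq_abs, abs_mul, abs_mul, abs_of_pos (gaussWeight_pos z)]
  refine mul_le_mul_of_nonneg_right ((mul_le_mul_of_nonneg_right ?_ (abs_nonneg _)).trans
    (hL p hp z)) (gaussWeight_pos z).le
  linarith

lemma abs_sub_le (hL : DominatedOnBox f' δ L) (hf : ∀ x, HasDerivAt f (f' x) x)
    {p q : ℝ × ℝ} (hp : p ∈ paramBox δ) (hq : q ∈ paramBox δ) (z : ℝ) :
    |f (p.2 * z + p.1) - f (q.2 * z + q.1)| ≤ L z * dist p q := by
  set T : ℝ × ℝ →L[ℝ] ℝ := z • ContinuousLinearMap.snd ℝ ℝ ℝ + ContinuousLinearMap.fst ℝ ℝ ℝ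
  have hT : ∀ p : ℝ × ℝ, T p = p.2 * z + p.1 := fun p => by simp [T, mul_comm]
  have hTnorm : ‖T‖ ≤ |z| + 1 := by
    refine (norm_add_le _ _).trans (add_le_add ?_ (ContinuousLinearMap.norm_fst_le ℝ ℝ ℝ))
    rw [norm_smul, Real.norm_eq_abs]
    exact mul_le_of_le_one_right (abs_nonneg z) (ContinuousLinearMap.norm_snd_le ℝ ℝ ℝ)
  have key := (convex_paramBox δ).norm_image_sub_le_of_norm_hasFDerivWithin_le
    (f := fun p => f (T p)) (f' := fun p => f' (T p) • T) (C := L z)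
    (fun p _ => ((hf (T p)).comp_hasFDerivAt p T.hasFDerivAt).hasFDerivWithinAt)
    (fun p hp => by
      rw [norm_smul, Real.norm_eq_abs, hT, mul_comm]
      exact (mul_le_mul_of_nonneg_right hTnorm (abs_nonneg _)).trans (hL p hp z)) hq hp
  simpa only [hT, Real.norm_eq_abs, dist_eq_norm] using key

lemma integrable_comp_mul_gaussWeight (hL : DominatedOnBox f' δ L)
    (hf : ∀ x, HasDerivAt f (f' x) x) (hLi : Integrable (fun z => L z * gaussWeight z))
    {p : ℝ × ℝ} (hp : p ∈ paramBox δ) :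
    Integrable (fun z => f (p.2 * z + p.1) * gaussWeight z) := by
  refine ((integrable_pow_mul_gaussWeight 0).const_mul |f 0| |>.add (hLi.const_mul δ)).mono'
    (((Differentiable.continuous fun x => (hf x).differentiableAt).comp (by fun_prop)).mul
      continuous_gaussWeight).aestronglyMeasurable (ae_of_all _ fun z => ?_)
  have hLz : 0 ≤ L z := (mul_nonneg (by positivity) (abs_nonneg _)).trans (hL p hp z)
  have hdiff := hL.abs_sub_le hf hp (zero_mem_paramBox (hp.2.1.trans_lt hp.2.2)) z
  simp only [Prod.snd_zero, Prod.fst_zero, zero_mul, add_zero] at hdiff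
  have := abs_sub_abs_le_abs_sub (f (p.2 * z + p.1)) (f 0)
  have := mul_le_mul_of_nonneg_left (dist_zero_le_of_mem_paramBox hp) hLz
  rw [Real.norm_eq_abs, abs_mul, abs_of_pos (gaussWeight_pos z)]
  calc |f (p.2 * z + p.1)| * gaussWeight z ≤ (|f 0| + L z * δ) * gaussWeight z :=
        mul_le_mul_of_nonneg_right (by linarith) (gaussWeight_pos z).le
    _ = _ := by simp only [Pi.add_apply]; ring

lemma lipschitzOnWith_gaussSmooth (hL : DominatedOnBox f' δ L)
    (hf : ∀ x, HasDerivAt f (f' x) x) (hLi : Integrable (fun z => L z * gaussWeight z)) :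
    LipschitzOnWith (∫ z, L z * gaussWeight z).toNNReal (gaussSmooth f) (paramBox δ) := by
  refine LipschitzOnWith.of_dist_le_mul fun p hp q hq => ?_
  have hp' := hL.integrable_comp_mul_gaussWeight hf hLi hp
  have hq' := hL.integrable_comp_mul_gaussWeight hf hLi hq
  rw [Real.dist_eq, gaussSmooth, gaussSmooth, ← integral_sub hp' hq', ← Real.norm_eq_abs]
  calc ‖∫ z, (f (p.2 * z + p.1) * gaussWeight z - f (q.2 * z + q.1) * gaussWeight z)‖
      ≤ ∫ z, dist p q * (L z * gaussWeight z) :=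
        norm_integral_le_of_norm_le (hLi.const_mul _) (ae_of_all _ fun z => by
          rw [← sub_mul, Real.norm_eq_abs, abs_mul, abs_of_pos (gaussWeight_pos z)]
          nlinarith [hL.abs_sub_le hf hp hq z, gaussWeight_pos z])
    _ = (∫ z, L z * gaussWeight z) * dist p q := by rw [integral_const_mul, mul_comm]
    _ ≤ _ := by gcongr; exact Real.le_coe_toNNReal _

lemma hasDerivAt_gaussSmooth_fst (hL : DominatedOnBox f' δ L)
    (hf : ∀ x, HasDerivAt f (f' x) x) (hf' : Continuous f')
    (hLi : Integrable (fun z => L z * gaussWeight z)) {b l : ℝ} (hp : (b, l) ∈ paramBox δ) :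
    HasDerivAt (fun t => gaussSmooth f (t, l)) (gaussSmooth f' (b, l)) b := by
  have hfc : Continuous f := Differentiable.continuous fun x => (hf x).differentiableAt
  refine (hasDerivAt_integral_of_dominated_loc_of_deriv_le (Ioo_mem_nhds hp.1.1 hp.1.2)
    (F := fun t z => f (l * z + t) * gaussWeight z)
    (F' := fun t z => f' (l * z + t) * gaussWeight z)
    (Eventually.of_forall fun t => ((hfc.comp (by fun_prop)).mul
      continuous_gaussWeight).aestronglyMeasurable)
    (hL.integrable_comp_mul_gaussWeight hf hLi hp)
    ((hf'.comp (by fun_prop)).mul continuous_gaussWeight).aestronglyMeasurable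
    (ae_of_all _ fun z t ht => ?_) hLi (ae_of_all _ fun z t _ => ?_)).2
  · have := hL (t, l) ⟨ht, hp.2⟩ z
    rw [Real.norm_eq_abs, abs_mul, abs_of_pos (gaussWeight_pos z)]
    refine mul_le_mul_of_nonneg_right (le_trans ?_ this) (gaussWeight_pos z).le
    nlinarith [abs_nonneg z, abs_nonneg (f' (l * z + t))]
  · exact ((hf _).comp t ((hasDerivAt_id t).const_add _)).mul_const _ |>.congr_deriv (by simp)

lemma abs_gaussSmooth_sub_sub_le (hL : DominatedOnBox f' δ L) (hL' : DominatedOnBox f'' δ L')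
    (hf : ∀ x, HasDerivAt f (f' x) x) (hf' : ∀ x, HasDerivAt f' (f'' x) x)
    (hLi : Integrable (fun z => L z * gaussWeight z))
    (hLi' : Integrable (fun z => L' z * gaussWeight z)) {η b b' l : ℝ} (hηδ : η ≤ δ)
    (hp : (b, l) ∈ paramBox η) (hq : (b', l) ∈ paramBox η) :
    |gaussSmooth f (b, l) - gaussSmooth f (b', l) - gaussSmooth f' 0 * (b - b')|
      ≤ (∫ z, L' z * gaussWeight z).toNNReal * η * |b - b'| := by
  set c := gaussSmooth f' 0
  have hmem : ∀ t ∈ Set.Ioo (-η) η, (t, l) ∈ paramBox η := fun t ht => ⟨ht, hp.2⟩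
  have h0 : (0 : ℝ × ℝ) ∈ paramBox δ := zero_mem_paramBox (hp.2.1.trans_lt (hp.2.2.trans_le hηδ))
  have hlip := hL'.lipschitzOnWith_gaussSmooth hf' hLi'
  have key := (convex_Ioo (-η) η).norm_image_sub_le_of_norm_hasDerivWithin_le
    (f := fun t => gaussSmooth f (t, l) - c * t) (f' := fun t => gaussSmooth f' (t, l) - c)
    (C := (∫ z, L' z * gaussWeight z).toNNReal * η)
    (fun t ht => (((hL.hasDerivAt_gaussSmooth_fst hf
      (Differentiable.continuous fun x => (hf' x).differentiableAt) hLi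
      (paramBox_mono hηδ (hmem t ht))).sub ((hasDerivAt_id t).const_mul c)).congr_deriv
        (by simp)).hasDerivWithinAt)
    (fun t ht => by
      rw [Real.norm_eq_abs, ← Real.dist_eq]
      exact (hlip.dist_le_mul _ (paramBox_mono hηδ (hmem t ht)) 0 h0).trans
        (by gcongr; exact dist_zero_le_of_mem_paramBox (hmem t ht)))
    hq.1 hp.1
  rw [Real.norm_eq_abs, Real.norm_eq_abs] at key
  calc _ = |gaussSmooth f (b, l) - c * b - (gaussSmooth f (b', l) - c * b')| := by ring_nf
    _ ≤ _ := key

end DominatedOnBox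

section LinkFunction

variable {g : ℝ → ℝ}

lemma ContDiff.hasDerivAt_iteratedDeriv {N n : ℕ} (hg : ContDiff ℝ N g) (hn : n < N) (x : ℝ) :
    HasDerivAt (iteratedDeriv n g) (iteratedDeriv (n + 1) g x) x := by
  rw [iteratedDeriv_succ]
  exact (hg.differentiable_iteratedDeriv n (by exact_mod_cast hn) x).hasDerivAt

lemma CondH2.contDiff (h : CondH2 g) : ContDiff ℝ 4 g := h.2.2.2.1

lemma CondH2.deriv_neg (h : CondH2 g) (x : ℝ) : deriv g (-x) = deriv g x := by
  obtain ⟨-, -, -, hg, -, hsymm⟩ := h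
  have hd : Differentiable ℝ g := hg.differentiable (by norm_num)
  have hg_eq : g = fun y => 1 - g (-y) := funext fun y => by linarith [hsymm y]
  have : HasDerivAt (fun y => 1 - g (-y)) (deriv g (-x)) x := by
    simpa using ((hd (-x)).hasDerivAt.comp x (hasDerivAt_neg x)).const_sub 1
  rw [← hg_eq] at this
  exact this.deriv.symm

lemma CondH2.deriv_nonneg (h : CondH2 g) (x : ℝ) : 0 ≤ deriv g x :=
  h.1.monotone.deriv_nonneg

lemma CondH2.abs_deriv_le (h : CondH2 g) (x : ℝ) : |deriv g x| ≤ deriv g 0 := by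
  have habs : deriv g |x| = deriv g x := by
    rcases abs_choice x with hx | hx <;> rw [hx]
    exact h.deriv_neg x
  rw [abs_of_nonneg (h.deriv_nonneg x), ← habs]
  exact h.2.2.2.2.1.antitoneOn Set.self_mem_Ici (abs_nonneg x) (abs_nonneg x)

lemma CondH2.deriv_zero_pos (h : CondH2 g) : 0 < deriv g 0 :=
  (h.deriv_nonneg 1).trans_lt (h.2.2.2.2.1 Set.self_mem_Ici (Set.mem_Ici.2 zero_le_one) one_pos)

lemma CondH2.iteratedDeriv_two_zero (h : CondH2 g) : iteratedDeriv 2 g 0 = 0 := by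
  have h₁ := h.contDiff.hasDerivAt_iteratedDeriv (n := 1) (by norm_num) 0
  have h₂ := (h.contDiff.hasDerivAt_iteratedDeriv (n := 1) (by norm_num) (-0)).comp 0
    (hasDerivAt_neg 0)
  rw [iteratedDeriv_one] at h₁ h₂
  have heven : (deriv g ∘ fun x => -x) = deriv g := funext h.deriv_neg
  rw [heven, neg_zero] at h₂
  linarith [h₁.unique h₂]

lemma CondH3.exists_dominatedOnBox (h : CondH3 g) (hg : ContDiff ℝ 4 g) :
    ∃ δ > 0, ∃ L : ℝ → ℝ, Integrable (fun z => L z * gaussWeight z) ∧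
      ∀ n, 2 ≤ n → n ≤ 4 → DominatedOnBox (iteratedDeriv n g) δ L := by
  obtain ⟨δ, hδ, L, hL, hdom⟩ := h
  refine ⟨δ, hδ, fun z => ∑ s, L s z, ?_, fun n hn₂ hn₄ p hp z => ?_⟩
  · simpa only [Finset.sum_mul, gaussWeight] using
      integrable_finsetSum Finset.univ fun s _ => (hL s).2
  obtain ⟨s, rfl⟩ : ∃ s : Fin 3, n = s + 2 := ⟨⟨n - 2, by omega⟩, (Nat.sub_add_cancel hn₂).symm⟩
  obtain ⟨b, l⟩ := p
  obtain ⟨hb, hl₀, hlδ⟩ := hp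
  -- (H3) is only assumed for `λ > 0`; the bound passes to `λ = 0` by continuity
  have hcont : Continuous fun t => (|z| + 1) * |iteratedDeriv (s + 2) g (t * z + b)| :=
    continuous_const.mul <| ((hg.continuous_iteratedDeriv _ (by norm_cast)).comp
      (by fun_prop)).abs
  have hle : (|z| + 1) * |iteratedDeriv (s + 2) g (l * z + b)| ≤ L s z :=
    le_of_tendsto ((hcont.tendsto l).mono_left nhdsWithin_le_nhds) <|
      eventually_of_mem (Ioo_mem_nhdsGT hlδ) fun t ht =>
        hdom s z t b (hl₀.trans_lt ht.1) ht.2 (abs_lt.2 hb)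
  exact hle.trans (Finset.single_le_sum (fun s _ => (hL s).1 z) (Finset.mem_univ s))

end LinkFunction

section TiltedMoments

variable {g L : ℝ → ℝ} {C δ : ℝ}

lemma m1_eq (hg : ContDiff ℝ 4 g) (hC : ∀ x, |deriv g x| ≤ C)
    (hL : ∀ n, 2 ≤ n → n ≤ 4 → DominatedOnBox (iteratedDeriv n g) δ L)
    (hLi : Integrable (fun z => L z * gaussWeight z)) {b l : ℝ} (hp : (b, l) ∈ paramBox δ) :
    m1 g b l =
      l * gaussSmooth (iteratedDeriv 2 g) (b, l) / gaussSmooth (iteratedDeriv 1 g) (b, l) := by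
  have hd : ∀ n < 4, ∀ x, HasDerivAt (iteratedDeriv n g) (iteratedDeriv (n + 1) g x) x :=
    fun n hn => hg.hasDerivAt_iteratedDeriv hn
  have hi₁ : Integrable (fun z => z * iteratedDeriv 1 g (l * z + b) * gaussWeight z) := by
    simpa using integrable_pow_mul_comp_mul_gaussWeight
      (hg.continuous_iteratedDeriv 1 (by norm_num)) (by simpa using hC) 1 l b
  rw [m1, ← iteratedDeriv_one]
  change (∫ z, z * iteratedDeriv 1 g (l * z + b) * gaussWeight z) /
    gaussSmooth (iteratedDeriv 1 g) (b, l) = _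
  rw [integral_mul_comp_mul_gaussWeight (hd 1 (by norm_num))
    ((hL 2 le_rfl (by norm_num)).integrable_comp_mul_gaussWeight (hd 1 (by norm_num)) hLi hp)
    hi₁
    ((hL 3 (by norm_num) (by norm_num)).integrable_comp_mul_gaussWeight (hd 2 (by norm_num))
      hLi hp)]

lemma m2_eq (hg : ContDiff ℝ 4 g) (hC : ∀ x, |deriv g x| ≤ C)
    (hL : ∀ n, 2 ≤ n → n ≤ 4 → DominatedOnBox (iteratedDeriv n g) δ L)
    (hLi : Integrable (fun z => L z * gaussWeight z)) {b l : ℝ} (hp : (b, l) ∈ paramBox δ) :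
    m2 g b l = (gaussSmooth (iteratedDeriv 1 g) (b, l) +
      l ^ 2 * gaussSmooth (iteratedDeriv 3 g) (b, l)) / gaussSmooth (iteratedDeriv 1 g) (b, l) := by
  have hd : ∀ n < 4, ∀ x, HasDerivAt (iteratedDeriv n g) (iteratedDeriv (n + 1) g x) x :=
    fun n hn => hg.hasDerivAt_iteratedDeriv hn
  have hbdd := integrable_pow_mul_comp_mul_gaussWeight
    (hg.continuous_iteratedDeriv 1 (by norm_num)) (by simpa using hC) (l := l) (b := b)
  have hi₁ : Integrable (fun z => iteratedDeriv 1 g (l * z + b) * gaussWeight z) :=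
    ((hL 2 le_rfl (by norm_num)).integrable_comp_mul_gaussWeight (hd 1 (by norm_num)) hLi hp :)
  have hi₂ : Integrable (fun z => iteratedDeriv 2 g (l * z + b) * gaussWeight z) :=
    ((hL 3 (by norm_num) (by norm_num)).integrable_comp_mul_gaussWeight (hd 2 (by norm_num))
      hLi hp :)
  have hi₃ : Integrable (fun z => iteratedDeriv 3 g (l * z + b) * gaussWeight z) :=
    ((hL 4 (by norm_num) le_rfl).integrable_comp_mul_gaussWeight (hd 3 (by norm_num)) hLi hp :)
  have hz₂ : Integrable (fun z => z * iteratedDeriv 2 g (l * z + b) * gaussWeight z) :=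
    ((hL 2 le_rfl (by norm_num)).integrable_mul_comp_mul_gaussWeight
      (hg.continuous_iteratedDeriv 2 (by norm_num)) hLi hp :)
  have hu : ∀ z, HasDerivAt (fun z => z * iteratedDeriv 1 g (l * z + b))
      (iteratedDeriv 1 g (l * z + b) + l * (z * iteratedDeriv 2 g (l * z + b))) z := fun z =>
    ((hasDerivAt_id z).mul ((hd 1 (by norm_num) _).comp z
      (((hasDerivAt_id z).const_mul l).add_const b))).congr_deriv
      (by simp only [id_eq, Function.comp_apply, mul_one, one_mul]; ring)
  have hstein := integral_mul_mul_gaussWeight_eq hu (by simpa using hbdd 1)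
    (by simpa [← mul_assoc, ← sq] using hbdd 2)
    ((hi₁.add (hz₂.const_mul l)).congr (ae_of_all _ fun z => by simp only [Pi.add_apply]; ring))
  rw [m2, ← iteratedDeriv_one]
  change (∫ z, z ^ 2 * iteratedDeriv 1 g (l * z + b) * gaussWeight z) /
    gaussSmooth (iteratedDeriv 1 g) (b, l) = _
  congr 1
  calc ∫ z, z ^ 2 * iteratedDeriv 1 g (l * z + b) * gaussWeight z
      = ∫ z, z * (z * iteratedDeriv 1 g (l * z + b)) * gaussWeight z := by
        congr 1; ext z; ring
    _ = ∫ z, (iteratedDeriv 1 g (l * z + b) + l * (z * iteratedDeriv 2 g (l * z + b))) *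
          gaussWeight z := hstein
    _ = (∫ z, iteratedDeriv 1 g (l * z + b) * gaussWeight z) +
          ∫ z, l * (z * iteratedDeriv 2 g (l * z + b) * gaussWeight z) := by
        rw [← integral_add hi₁ (hz₂.const_mul l)]; congr 1; ext z; ring
    _ = gaussSmooth (iteratedDeriv 1 g) (b, l) +
          l * (l * gaussSmooth (iteratedDeriv 3 g) (b, l)) := by
        rw [integral_const_mul, integral_mul_comp_mul_gaussWeight (hd 2 (by norm_num)) hi₂ hz₂ hi₃]
        exact rfl
    _ = _ := by ring

end TiltedMoments

lemma mul_abs_sub_le_of_sq_mul_eq {r l l' U U' : ℝ} (hl : 0 ≤ l) (hl' : 0 < l')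
    (hU : r ≤ |U|) (h : l ^ 2 * U = l' ^ 2 * U') : r * |l - l'| ≤ l' * |U - U'| := by
  have hsum : 0 < l + l' := by positivity
  have key : (l + l') * (|l - l'| * |U|) = l' ^ 2 * |U - U'| := by
    rw [← abs_of_pos hsum, ← abs_mul, ← abs_mul, ← abs_sq l', ← abs_mul,
      show (l + l') * ((l - l') * U) = -(l' ^ 2 * (U - U')) by linear_combination h, abs_neg]
  refine le_of_mul_le_mul_left ?_ hsum
  calc (l + l') * (r * |l - l'|) ≤ (l + l') * (|l - l'| * |U|) := by
        rw [mul_comm r]; gcongr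
    _ = l' ^ 2 * |U - U'| := key
    _ ≤ (l + l') * (l' * |U - U'|) := by
        rw [← mul_assoc, sq]; gcongr; linarith

lemma eq_of_mul_eq_of_sq_mul_eq {r K κ η b b' l l' U U' V V' : ℝ}
    (hl : 0 ≤ l) (hl' : 0 < l') (hl'η : l' ≤ η) (hr : 0 < r)
    (hU : r ≤ |U|) (hUU' : |U - U'| ≤ K * max |b - b'| |l - l'|)
    (hV : |V| ≤ K * η)
    (hVV' : |V - V' - κ * (b - b')| ≤ K * (η * max |b - b'| |l - l'| + |l - l'|))
    (hKη : 2 * K * η ≤ r) (hκ : (r * K + 2 * K ^ 2) * η < r * |κ|)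
    (h₁ : l * V = l' * V') (h₂ : l ^ 2 * U = l' ^ 2 * U') : b = b' ∧ l = l' := by
  have hK : 0 ≤ K := by
    by_contra! hK
    nlinarith [abs_nonneg V]
  have hl'K : 2 * (l' * K) ≤ r := by nlinarith
  have hlU := mul_abs_sub_le_of_sq_mul_eq hl hl' hU h₂
  have hlb : |l - l'| ≤ |b - b'| := by
    by_contra! hlt
    rw [max_eq_right hlt.le] at hUU'
    have : r * |l - l'| ≤ r / 2 * |l - l'| :=
      calc r * |l - l'| ≤ l' * (K * |l - l'|) := hlU.trans (by gcongr)
        _ = l' * K * |l - l'| := by ring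
        _ ≤ r / 2 * |l - l'| := by gcongr; linarith
    nlinarith [abs_nonneg (b - b')]
  rw [max_eq_left hlb] at hUU' hVV'
  have hΔl : r * |l - l'| ≤ l' * K * |b - b'| :=
    calc r * |l - l'| ≤ l' * (K * |b - b'|) := hlU.trans (by gcongr)
      _ = l' * K * |b - b'| := by ring
  have hVdiff : l' * |V - V'| = |l - l'| * |V| := by
    rw [← abs_of_pos hl', ← abs_mul, ← abs_mul, abs_of_pos hl',
      show l' * (V - V') = -((l - l') * V) by linear_combination h₁, abs_neg]
  have hlow : |κ| * |b - b'| - K * (η * |b - b'| + |l - l'|) ≤ |V - V'| := by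
    have := abs_sub_abs_le_abs_sub (κ * (b - b')) (-(V - V' - κ * (b - b')))
    rw [abs_mul, abs_neg, sub_neg_eq_add, add_sub_cancel] at this
    linarith
  have hb : b = b' := by
    have h₃ : l' * ((|κ| - K * η) * |b - b'|) ≤ 2 * K * η * |l - l'| := by
      have : l' * (K * |l - l'|) ≤ η * (K * |l - l'|) := by gcongr
      calc l' * ((|κ| - K * η) * |b - b'|)
          ≤ l' * (|V - V'| + K * |l - l'|) := by gcongr; linarith
        _ ≤ |l - l'| * (K * η) + η * (K * |l - l'|) := by
          rw [mul_add, hVdiff]; gcongr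
        _ = 2 * K * η * |l - l'| := by ring
    have h₄ : l' * (|b - b'| * (r * |κ| - η * (r * K + 2 * K ^ 2))) ≤ 0 := by
      have := mul_le_mul_of_nonneg_left hΔl
        (mul_nonneg (mul_nonneg zero_le_two hK) (hl'.le.trans hl'η))
      nlinarith
    have : |b - b'| ≤ 0 := by
      by_contra! h
      have := mul_pos hl' (mul_pos h (sub_pos.2 hκ))
      linarith
    exact sub_eq_zero.1 (abs_nonpos_iff.1 this)
  subst hb
  refine ⟨rfl, ?_⟩
  simp only [sub_self, abs_zero, mul_zero] at hΔl
  have : |l - l'| = 0 := le_antisymm (by nlinarith [abs_nonneg (l - l')]) (abs_nonneg _)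
  linarith [abs_eq_zero.1 this]

lemma eventually_mul_lt (X : ℝ) {Y : ℝ} (hY : 0 < Y) : ∀ᶠ η in 𝓝[>] (0 : ℝ), X * η < Y :=
  nhdsWithin_le_nhds <|
    ((continuous_const.mul continuous_id).tendsto' 0 0 (by simp)).eventually_lt_const hY

lemma LipschitzOnWith.abs_mul_sub_mul_swap_le {α : Type*} [PseudoMetricSpace α] {s : Set α}
    {M : ℝ≥0} {A B : α → ℝ} {C : ℝ} (hA : LipschitzOnWith M A s) (hB : LipschitzOnWith M B s)
    {p q : α} (hp : p ∈ s) (hq : q ∈ s) (hAp : |A p| ≤ C) (hBp : |B p| ≤ C) :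
    |A p * B q - A q * B p| ≤ 2 * C * M * dist p q := by
  have hA' := hA.dist_le_mul p hp q hq
  have hB' := hB.dist_le_mul q hq p hp
  rw [Real.dist_eq] at hA' hB'
  calc |A p * B q - A q * B p| = |A p * (B q - B p) + B p * (A p - A q)| := by ring_nf
    _ ≤ C * (M * dist q p) + C * (M * dist p q) := by
        refine (abs_add_le _ _).trans (add_le_add ?_ ?_) <;> rw [abs_mul] <;>
          exact mul_le_mul ‹_› ‹_› (abs_nonneg _) ((abs_nonneg _).trans hAp)
    _ = 2 * C * M * dist p q := by rw [dist_comm]; ring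

section MomentMap

variable {δ η : ℝ} {M : ℝ≥0} {A₀ A₁ A₂ : ℝ × ℝ → ℝ}

lemma LipschitzOnWith.abs_sub_apply_zero_le {A : ℝ × ℝ → ℝ}
    (hA : LipschitzOnWith M A (paramBox δ)) (hηδ : η ≤ δ) {p : ℝ × ℝ} (hp : p ∈ paramBox η) :
    |A p - A 0| ≤ M * η := by
  have hpδ := paramBox_mono hηδ hp
  rw [← Real.dist_eq]
  exact (hA.dist_le_mul p hpδ 0 (zero_mem_paramBox (hpδ.2.1.trans_lt hpδ.2.2))).trans
    (by gcongr; exact dist_zero_le_of_mem_paramBox hp)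

lemma LipschitzOnWith.abs_apply_bounds {A : ℝ × ℝ → ℝ}
    (hA : LipschitzOnWith M A (paramBox δ)) (hηδ : η ≤ δ) (hηA : M * η < |A 0| / 2)
    {p : ℝ × ℝ} (hp : p ∈ paramBox η) : |A 0| / 2 ≤ |A p| ∧ |A p| ≤ 2 * |A 0| := by
  have := abs_le.1 ((abs_abs_sub_abs_le_abs_sub _ _).trans (hA.abs_sub_apply_zero_le hηδ hp))
  constructor <;> linarith

lemma abs_cross_sub_le {C : ℝ} (hA₁ : A₁ 0 = 0) (hlip₀ : LipschitzOnWith M A₀ (paramBox δ))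
    (hlip₁ : LipschitzOnWith M A₁ (paramBox δ))
    (hshift : ∀ η ≤ δ, ∀ b b' l : ℝ, (b, l) ∈ paramBox η → (b', l) ∈ paramBox η →
      |A₁ (b, l) - A₁ (b', l) - A₂ 0 * (b - b')| ≤ M * η * |b - b'|)
    (hηδ : η ≤ δ) {b b' l l' : ℝ} (hp : (b, l) ∈ paramBox η) (hq : (b', l') ∈ paramBox η)
    (hC : |A₀ (b', l')| ≤ C) (ha₂ : |A₂ 0| ≤ C) :
    |A₁ (b, l) * A₀ (b', l') - A₁ (b', l') * A₀ (b, l) - A₀ 0 * A₂ 0 * (b - b')|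
      ≤ M * (2 * C + M) * (η * max |b - b'| |l - l'| + |l - l'|) := by
  have hmid : (b', l) ∈ paramBox η := ⟨hq.1, hp.2⟩
  have hD : ∀ {x y : ℝ × ℝ}, x ∈ paramBox η → y ∈ paramBox η → ∀ A : ℝ × ℝ → ℝ,
      LipschitzOnWith M A (paramBox δ) → |A x - A y| ≤ M * max |x.1 - y.1| |x.2 - y.2| :=
    fun hx hy A hA => by
      simpa [Prod.dist_eq, Real.dist_eq] using
        hA.dist_le_mul _ (paramBox_mono hηδ hx) _ (paramBox_mono hηδ hy)
  have hM : (0 : ℝ) ≤ M := M.2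
  have hC0 : 0 ≤ C := (abs_nonneg _).trans hC
  have hq₀ := hlip₀.abs_sub_apply_zero_le hηδ hq
  have hq₁ := hlip₁.abs_sub_apply_zero_le hηδ hq
  rw [hA₁, sub_zero] at hq₁
  have hlip_l : |A₁ (b', l) - A₁ (b', l')| ≤ M * |l - l'| := by
    simpa using hD hmid hq A₁ hlip₁
  have hΔb : |b - b'| ≤ max |b - b'| |l - l'| := le_max_left _ _
  calc _ = |A₀ (b', l') * ((A₁ (b, l) - A₁ (b', l) - A₂ 0 * (b - b')) + (A₁ (b', l) - A₁ (b', l')))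
          + A₂ 0 * (b - b') * (A₀ (b', l') - A₀ 0)
          + A₁ (b', l') * -(A₀ (b, l) - A₀ (b', l'))| := by ring_nf
    _ ≤ C * (M * η * |b - b'| + M * |l - l'|) + C * |b - b'| * (M * η)
          + M * η * (M * max |b - b'| |l - l'|) := by
        refine (abs_add_le _ _).trans (add_le_add ((abs_add_le _ _).trans (add_le_add ?_ ?_)) ?_)
          <;> simp only [abs_mul, abs_neg]
        · exact mul_le_mul hC ((abs_add_le _ _).trans (add_le_add (hshift η hηδ b b' l hp hmid)
            hlip_l)) (abs_nonneg _) ((abs_nonneg _).trans hC)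
        · exact mul_le_mul (mul_le_mul_of_nonneg_right ha₂ (abs_nonneg _)) hq₀ (abs_nonneg _)
            (mul_nonneg hC0 (abs_nonneg _))
        · exact mul_le_mul hq₁ (hD hp hq A₀ hlip₀) (abs_nonneg _) ((abs_nonneg _).trans hq₁)
    _ = (2 * C * M * η) * |b - b'| + (C * M) * |l - l'| + M * M * η * max |b - b'| |l - l'| := by
        ring
    _ ≤ (2 * C * M * η) * max |b - b'| |l - l'| + (2 * C * M + M * M) * |l - l'|
          + M * M * η * max |b - b'| |l - l'| := by
        have hη : 0 ≤ η := hp.2.1.trans hp.2.2.le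
        gcongr; nlinarith
    _ = M * (2 * C + M) * (η * max |b - b'| |l - l'| + |l - l'|) := by ring

theorem injOn_moment_map (hδ : 0 < δ) (hA₀ : A₀ 0 ≠ 0) (hA₁ : A₁ 0 = 0) (hA₂ : A₂ 0 ≠ 0)
    (hlip₀ : LipschitzOnWith M A₀ (paramBox δ)) (hlip₁ : LipschitzOnWith M A₁ (paramBox δ))
    (hlip₂ : LipschitzOnWith M A₂ (paramBox δ))
    (hshift : ∀ η ≤ δ, ∀ b b' l : ℝ, (b, l) ∈ paramBox η → (b', l) ∈ paramBox η →
      |A₁ (b, l) - A₁ (b', l) - A₂ 0 * (b - b')| ≤ M * η * |b - b'|) :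
    ∃ η ∈ Set.Ioc 0 δ, Set.InjOn
      (fun p : ℝ × ℝ => (p.2 * A₁ p / A₀ p, (A₀ p + p.2 ^ 2 * A₂ p) / A₀ p))
      (Set.Ioo (-η) η ×ˢ Set.Ioo 0 η) := by
  set C := 2 * (|A₀ 0| + |A₂ 0|)
  set K := (M : ℝ) * (2 * C + M)
  set r := |A₀ 0| * |A₂ 0| / 4
  have hr : 0 < r := by positivity
  have hC : 0 ≤ C := by positivity
  have hK : 2 * C * M + M * M = K := by ring
  have hCM : C * M ≤ K := by rw [← hK]; nlinarith [M.2]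
  obtain ⟨η, hη, hηδ, hη₀, hη₂, hηK, hηκ⟩ : ∃ η > 0, 1 * η < δ ∧ M * η < |A₀ 0| / 2 ∧
      M * η < |A₂ 0| / 2 ∧ 2 * K * η < r ∧ (r * K + 2 * K ^ 2) * η < r * |A₀ 0 * A₂ 0| :=
    (eventually_mem_nhdsWithin.and <| (eventually_mul_lt _ hδ).and <|
      (eventually_mul_lt _ (by positivity)).and <| (eventually_mul_lt _ (by positivity)).and <|
      (eventually_mul_lt _ hr).and (eventually_mul_lt _ (by positivity))).exists
  replace hηδ : η ≤ δ := by linarith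
  refine ⟨η, ⟨hη, hηδ⟩, ?_⟩
  rintro ⟨b, l⟩ ⟨hb, hl⟩ ⟨b', l'⟩ ⟨hb', hl'⟩ heq
  have hp : (b, l) ∈ paramBox η := ⟨hb, Set.Ioo_subset_Ico_self hl⟩
  have hq : (b', l') ∈ paramBox η := ⟨hb', Set.Ioo_subset_Ico_self hl'⟩
  obtain ⟨hp₀, hp₀C⟩ := hlip₀.abs_apply_bounds hηδ hη₀ hp
  obtain ⟨hq₀, hq₀C⟩ := hlip₀.abs_apply_bounds hηδ hη₀ hq
  obtain ⟨hp₂, hp₂C⟩ := hlip₂.abs_apply_bounds hηδ hη₂ hp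
  have hne₀ : A₀ (b, l) ≠ 0 := abs_pos.1 ((by positivity : 0 < |A₀ 0| / 2).trans_le hp₀)
  have hne₀' : A₀ (b', l') ≠ 0 := abs_pos.1 ((by positivity : 0 < |A₀ 0| / 2).trans_le hq₀)
  obtain ⟨h₁, h₂⟩ := Prod.mk.inj heq
  rw [div_eq_div_iff hne₀ hne₀'] at h₁ h₂
  suffices b = b' ∧ l = l' by rw [this.1, this.2]
  dsimp only at hl hl' h₁ h₂
  refine eq_of_mul_eq_of_sq_mul_eq (r := r) (K := K)
    (U := A₂ (b, l) * A₀ (b', l')) (U' := A₂ (b', l') * A₀ (b, l))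
    (V := A₁ (b, l) * A₀ (b', l')) (V' := A₁ (b', l') * A₀ (b, l))
    hl.1.le hl'.1 hl'.2.le hr ?_ ?_ ?_ (abs_cross_sub_le hA₁ hlip₀ hlip₁ hshift hηδ hp hq
      (by linarith) (by linarith [abs_nonneg (A₀ 0)])) hηK.le hηκ
    (by linear_combination h₁) (by linear_combination h₂)
  · calc r = |A₂ 0| / 2 * (|A₀ 0| / 2) := by ring
      _ ≤ _ := by rw [abs_mul]; gcongr
  · have hD : dist (b, l) (b', l') = max |b - b'| |l - l'| := by
      simp only [Prod.dist_eq, Real.dist_eq]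
    calc _ ≤ 2 * C * M * dist (b, l) (b', l') :=
          hlip₂.abs_mul_sub_mul_swap_le hlip₀ (paramBox_mono hηδ hp) (paramBox_mono hηδ hq)
            (by linarith [abs_nonneg (A₀ 0)]) (by linarith [abs_nonneg (A₂ 0)])
      _ ≤ K * max |b - b'| |l - l'| := by rw [hD]; gcongr; rw [← hK]; nlinarith [M.2]
  · have hp₁ := hlip₁.abs_sub_apply_zero_le hηδ hp
    rw [hA₁, sub_zero] at hp₁
    rw [abs_mul]
    calc _ ≤ M * η * C := mul_le_mul hp₁ (by linarith) (abs_nonneg _) ((abs_nonneg _).trans hp₁)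
      _ = (C * M) * η := by ring
      _ ≤ K * η := by gcongr

end MomentMap

theorem tilted_moments_locally_injective
    (g : ℝ → ℝ) (hg2 : CondH2 g) (hg3 : CondH3 g)
    (hg3ne : iteratedDeriv 3 g 0 ≠ 0) :
    ∃ B > (0 : ℝ), ∃ L > (0 : ℝ),
      Set.InjOn (fun p : ℝ × ℝ => (m1 g p.1 p.2, m2 g p.1 p.2))
        (Set.Ioo (-B) B ×ˢ Set.Ioo 0 L) := by
  have hg := hg2.contDiff
  have hd : ∀ n < 4, ∀ x, HasDerivAt (iteratedDeriv n g) (iteratedDeriv (n + 1) g x) x :=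
    fun n hn => hg.hasDerivAt_iteratedDeriv hn
  obtain ⟨δ, hδ, L, hLi, hL⟩ := hg3.exists_dominatedOnBox hg
  have hlip : ∀ n, 1 ≤ n → n ≤ 3 → LipschitzOnWith (∫ z, L z * gaussWeight z).toNNReal
      (gaussSmooth (iteratedDeriv n g)) (paramBox δ) := fun n h₁ h₃ =>
    (hL (n + 1) (by omega) (by omega)).lipschitzOnWith_gaussSmooth (hd n (by omega)) hLi
  have hc := integral_gaussWeight_pos
  obtain ⟨η, ⟨hη, hηδ⟩, hinj⟩ := injOn_moment_map hδ
    (by rw [gaussSmooth_zero, iteratedDeriv_one]; exact (mul_pos hg2.deriv_zero_pos hc).ne')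
    (by rw [gaussSmooth_zero, hg2.iteratedDeriv_two_zero, zero_mul])
    (by rw [gaussSmooth_zero]; exact mul_ne_zero hg3ne hc.ne')
    (hlip 1 le_rfl (by norm_num)) (hlip 2 (by norm_num) (by norm_num)) (hlip 3 (by norm_num) le_rfl)
    (fun η hηδ b b' l hp hq => (hL 3 (by norm_num) (by norm_num)).abs_gaussSmooth_sub_sub_le
      (hL 4 (by norm_num) le_rfl) (hd 2 (by norm_num)) (hd 3 (by norm_num)) hLi hLi hηδ hp hq)
  refine ⟨η, hη, η, hη, hinj.congr fun ⟨b, l⟩ ⟨hb, hl⟩ => ?_⟩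
  have hp : (b, l) ∈ paramBox δ := paramBox_mono hηδ ⟨hb, Set.Ioo_subset_Ico_self hl⟩
  simp only [m1_eq hg hg2.abs_deriv_le hL hLi hp, m2_eq hg hg2.abs_deriv_le hL hLi hp]

end
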